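/- Let A be an n×n real matrix, and let Λ = diag(λ₁,…,λₙ) and M = diag(μ₁,…,μₙ) be invertible diagonal matrices. If there exists a nonzero vector x ∈ ℝⁿ with (AᵀΛ⁻¹A − M)x = 0, then there exists a nonzero vector y ∈ ℝⁿ with (AM⁻¹Aᵀ − Λ)y = 0. -/

import Mathlib

open Matrix

/-!
If `(B L⁻¹ A - M) x = 0` then `y = L⁻¹ A x` satisfies `B y = M x`, hence
`A M⁻¹ B y = A x = L y`; and `y = 0` would force `M x = 0`, i.e. `x = 0`.
-/

namespace Matrix

variable {R m n : Type*} [CommRing R] [Fintype m] [Fintype n] [DecidableEq m]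
  {A : Matrix m n R} {B : Matrix n m R} {L : Matrix m m R} {M : Matrix n n R} {x : n → R}

theorem mulVec_inv_mulVec_mulVec_eq (h : (B * L⁻¹ * A - M) *ᵥ x = 0) :
    B *ᵥ (L⁻¹ *ᵥ A *ᵥ x) = M *ᵥ x := by
  rw [sub_mulVec, sub_eq_zero] at h
  rwa [mulVec_mulVec, mulVec_mulVec]

theorem sub_mulVec_inv_mulVec_mulVec_eq_zero [DecidableEq n] (hL : IsUnit L) (hM : IsUnit M)
    (h : (B * L⁻¹ * A - M) *ᵥ x = 0) :
    (A * M⁻¹ * B - L) *ᵥ (L⁻¹ *ᵥ A *ᵥ x) = 0 := by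
  have hLd := (isUnit_iff_isUnit_det L).mp hL
  have hMd := (isUnit_iff_isUnit_det M).mp hM
  calc (A * M⁻¹ * B - L) *ᵥ (L⁻¹ *ᵥ A *ᵥ x)
      = (A * M⁻¹) *ᵥ (B *ᵥ (L⁻¹ *ᵥ A *ᵥ x)) - (L * L⁻¹) *ᵥ A *ᵥ x := by
        rw [sub_mulVec]
        simp only [mulVec_mulVec, Matrix.mul_assoc]
    _ = (A * (M⁻¹ * M)) *ᵥ x - A *ᵥ x := by
        rw [mulVec_inv_mulVec_mulVec_eq h, mulVec_mulVec, Matrix.mul_assoc,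
          mul_nonsing_inv L hLd, one_mulVec]
    _ = 0 := by rw [nonsing_inv_mul M hMd, Matrix.mul_one, sub_self]

theorem inv_mulVec_mulVec_ne_zero [DecidableEq n] (hM : IsUnit M) (hx : x ≠ 0)
    (h : (B * L⁻¹ * A - M) *ᵥ x = 0) : L⁻¹ *ᵥ A *ᵥ x ≠ 0 := by
  intro hy
  have hMx : M *ᵥ x = 0 := by rw [← mulVec_inv_mulVec_mulVec_eq h, hy, mulVec_zero]
  exact hx (mulVec_injective_of_isUnit hM (by rw [hMx, mulVec_zero]))

end Matrix

theorem stmt_3_general (n : ℕ) (A L M : Matrix (Fin n) (Fin n) ℝ)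
    (hLinv : IsUnit L) (hMinv : IsUnit M)
    (x : Fin n → ℝ) (hx : x ≠ 0) (h : (Aᵀ * L⁻¹ * A - M) *ᵥ x = 0) :
    ∃ y : Fin n → ℝ, y ≠ 0 ∧ (A * M⁻¹ * Aᵀ - L) *ᵥ y = 0 :=
  ⟨L⁻¹ *ᵥ A *ᵥ x, inv_mulVec_mulVec_ne_zero hMinv hx h,
    sub_mulVec_inv_mulVec_mulVec_eq_zero hLinv hMinv h⟩

theorem stmt_3 (n : ℕ) (A L M : Matrix (Fin n) (Fin n) ℝ)
    (hL : L.IsDiag) (hM : M.IsDiag) (hLinv : IsUnit L) (hMinv : IsUnit M)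
    (x : Fin n → ℝ) (hx : x ≠ 0) (h : (Aᵀ * L⁻¹ * A - M) *ᵥ x = 0) :
    ∃ y : Fin n → ℝ, y ≠ 0 ∧ (A * M⁻¹ * Aᵀ - L) *ᵥ y = 0 :=
  stmt_3_general n A L M hLinv hMinv x hx h
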